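/- Let F be a rational function, bounded and injective on a bounded domain Ω ⊂ ℂ. Then for z, w outside the closure of F(Ω), the exponential transform satisfies E_{F(Ω)}(z,w) = Π_{α,β ∈ ℙ} E_Ω(α,β)^{D_z(α) D_w(β)}, where D_z and D_w are the divisors (multiplicity functions) of F - z and F - w on the Riemann sphere. -/

import Mathlib

open MeasureTheory ComplexConjugate Polynomial

/-- The exponential transform
`E_D(z,w) = exp((1/(2πi)) ∫_D dζ/(ζ-z) ∧ dζ̄/(ζ̄-w̄)) = exp((-1/π) ∫_D dm(ζ)/((ζ-z)(ζ̄-w̄)))`. -/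
noncomputable def expTransform (D : Set ℂ) (z w : ℂ) : ℂ :=
  Complex.exp ((-1 / (Real.pi : ℂ)) * ∫ ζ in D, 1 / ((ζ - z) * (conj ζ - conj w)))

/-!
Write `F = P / Q`. Since `F - c = (P - c Q) / Q`, the logarithmic derivative `F' / (F - c)` is the
partial fraction `∑ α, D_c(α) / (ζ - α)`. Multiplying the one for `c = z` by the conjugate of the
one for `c = w` gives
`|F'|² / ((F - z)(F̄ - w̄)) = ∑ α β, D_z(α) D_w(β) / ((ζ - α)(ζ̄ - β̄))`,
and the change of variables `ζ ↦ F ζ`, whose real Jacobian is `|F'|²`, turns the integral over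
`F(Ω)` defining `E_{F(Ω)}(z, w)` into the corresponding `ℤ`-combination of the integrals defining
the `E_Ω(α, β)`. Coprimality and boundedness of `F` keep the poles of `F` off `closure Ω`, and
`z, w ∉ closure F(Ω)` keeps the zeros of `F - z`, `F - w` off it, so every integral converges.
-/

namespace Polynomial

section Field

variable {K : Type*} [Field K]

theorem Splits.eval_derivative_div_eval_eq_sum [DecidableEq K] {p : K[X]} (hp : p.Splits) {x : K}
    (hx : p.eval x ≠ 0) {S : Finset K} (hS : p.roots.toFinset ⊆ S) :
    p.derivative.eval x / p.eval x = ∑ r ∈ S, (p.rootMultiplicity r : K) / (x - r) := by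
  have hp0 : p ≠ 0 := fun h => hx (by simp [h])
  rw [hp.eval_derivative_div_eval_of_ne_zero hx, Finset.sum_multiset_map_count]
  refine (Finset.sum_congr rfl fun r _ => ?_).trans (Finset.sum_subset hS fun r _ hr => ?_)
  · rw [count_roots, nsmul_eq_mul, mul_one_div]
  · rw [rootMultiplicity_eq_zero fun h => hr (by simpa [hp0] using h), Nat.cast_zero, zero_div]

/-- The paper's `D_c(α)`: the order at `α` of `P / Q - c`, provided `P` and `Q` are coprime. -/
noncomputable def divisorOrd (P Q : K[X]) (c α : K) : ℤ :=
  ((P - C c * Q).rootMultiplicity α : ℤ) - Q.rootMultiplicity α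

noncomputable def divisorSupport [DecidableEq K] (P Q : K[X]) (c : K) : Finset K :=
  (P - C c * Q).roots.toFinset ∪ Q.roots.toFinset

theorem sum_divisorOrd_div_sub [IsAlgClosed K] [DecidableEq K] (P Q : K[X]) (c : K) {x : K}
    (hQ : Q.eval x ≠ 0) (hPc : (P - C c * Q).eval x ≠ 0) :
    ∑ α ∈ divisorSupport P Q c, (divisorOrd P Q c α : K) / (x - α) =
      (P - C c * Q).derivative.eval x / (P - C c * Q).eval x -
        Q.derivative.eval x / Q.eval x := by
  rw [(IsAlgClosed.splits _).eval_derivative_div_eval_eq_sum hPc Finset.subset_union_left,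
    (IsAlgClosed.splits _).eval_derivative_div_eval_eq_sum hQ Finset.subset_union_right,
    ← Finset.sum_sub_distrib]
  simp only [divisorSupport, divisorOrd, Int.cast_sub, Int.cast_natCast, sub_div]

end Field

section NormedField

variable {K : Type*} [NontriviallyNormedField K] {P Q : K[X]}

theorem hasDerivAt_eval_div_eval {x : K} (hQ : Q.eval x ≠ 0) :
    HasDerivAt (fun t => P.eval t / Q.eval t)
      ((P.derivative.eval x * Q.eval x - P.eval x * Q.derivative.eval x) / Q.eval x ^ 2) x :=
  (P.hasDerivAt x).div (Q.hasDerivAt x) hQ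

theorem deriv_eval_div_eval_div_sub_eq_sum [IsAlgClosed K] [DecidableEq K] (c : K) {x : K}
    (hQ : Q.eval x ≠ 0) (hPc : (P - C c * Q).eval x ≠ 0) :
    deriv (fun t => P.eval t / Q.eval t) x / (P.eval x / Q.eval x - c) =
      ∑ α ∈ divisorSupport P Q c, (divisorOrd P Q c α : K) / (x - α) := by
  rw [sum_divisorOrd_div_sub P Q c hQ hPc, (hasDerivAt_eval_div_eval hQ).deriv]
  simp only [eval_sub, eval_mul, eval_C, derivative_sub, derivative_C_mul] at hPc ⊢
  rw [div_sub' hQ, mul_comm _ c, div_sub_div _ _ hPc hQ, div_div_div_eq,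
    div_eq_div_iff (mul_ne_zero (pow_ne_zero 2 hQ) hPc) (mul_ne_zero hPc hQ)]
  ring

theorem eval_ne_zero_of_mem_closure_of_bounded (hco : IsCoprime P Q) (hQ : Q ≠ 0) {s : Set K}
    (hs : IsOpen s) (hbdd : ∃ C : ℝ, ∀ ζ ∈ s, ‖P.eval ζ / Q.eval ζ‖ ≤ C) {α : K}
    (hα : α ∈ closure s) : Q.eval α ≠ 0 := by
  obtain ⟨C, hC⟩ := hbdd
  set Z := {x | Q.IsRoot x}
  have hZ : Dense Zᶜ :=
    Set.compl_eq_univ_sdiff Z ▸ dense_univ.sdiff_finite (finite_setOfPred_isRoot hQ)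
  have hαZ : α ∈ closure (s ∩ Zᶜ) :=
    closure_minimal (hZ.open_subset_closure_inter hs) isClosed_closure hα
  have hclosed : IsClosed {x | ‖P.eval x‖ ≤ C * ‖Q.eval x‖} :=
    isClosed_le (P.continuous.norm) (continuous_const.mul Q.continuous.norm)
  have hsub : s ∩ Zᶜ ⊆ {x | ‖P.eval x‖ ≤ C * ‖Q.eval x‖} := fun x ⟨hxs, hxZ⟩ => by
    simpa only [Set.mem_ofPred_eq, norm_div, div_le_iff₀ (norm_pos_iff.mpr hxZ)] using hC x hxs
  intro hQα
  have hPα : P.eval α = 0 := by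
    simpa [hQα] using hclosed.closure_subset_iff.mpr hsub hαZ
  obtain ⟨u, v, huv⟩ := hco
  simpa [hPα, hQα] using congrArg (eval α) huv

theorem eval_sub_C_mul_ne_zero_of_mem_closure {s : Set K} {c α : K} (hα : α ∈ closure s)
    (hQ : Q.eval α ≠ 0) (hc : c ∉ closure ((fun t => P.eval t / Q.eval t) '' s)) :
    (P - C c * Q).eval α ≠ 0 := by
  intro h
  rw [eval_sub, eval_mul, eval_C, sub_eq_zero, ← div_eq_iff hQ] at h
  exact hc (h ▸ (hasDerivAt_eval_div_eval hQ).continuousAt.continuousWithinAt.mem_closure_image hα)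

theorem notMem_closure_of_mem_divisorSupport [DecidableEq K] {s : Set K} {c α : K}
    (hQ : ∀ x ∈ closure s, Q.eval x ≠ 0)
    (hc : c ∉ closure ((fun t => P.eval t / Q.eval t) '' s)) (hα : α ∈ divisorSupport P Q c) :
    α ∉ closure s := by
  intro hαs
  rcases Finset.mem_union.mp hα with h | h <;> rw [Multiset.mem_toFinset, mem_roots'] at h
  · exact eval_sub_C_mul_ne_zero_of_mem_closure hαs (hQ α hαs) hc h.2
  · exact hQ α hαs h.2

end NormedField

end Polynomial

noncomputable def expTransformKernel (z w ζ : ℂ) : ℂ := 1 / ((ζ - z) * (conj ζ - conj w))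

theorem expTransform_eq (D : Set ℂ) (z w : ℂ) :
    expTransform D z w =
      Complex.exp ((-1 / (Real.pi : ℂ)) * ∫ ζ in D, expTransformKernel z w ζ) :=
  rfl

theorem continuousOn_expTransformKernel {s : Set ℂ} {z w : ℂ} (hz : z ∉ s) (hw : w ∉ s) :
    ContinuousOn (expTransformKernel z w) s := by
  refine continuousOn_const.div (by fun_prop) fun ζ hζ => mul_ne_zero ?_ ?_
  · exact sub_ne_zero.mpr fun h => hz (h ▸ hζ)
  · exact sub_ne_zero.mpr fun h => hw (RingHom.injective _ h ▸ hζ)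

theorem integrableOn_expTransformKernel {s : Set ℂ} (hs : Bornology.IsBounded s) {z w : ℂ}
    (hz : z ∉ closure s) (hw : w ∉ closure s) : IntegrableOn (expTransformKernel z w) s :=
  ((continuousOn_expTransformKernel hz hw).integrableOn_compact
    hs.isCompact_closure).mono_set subset_closure

theorem Complex.det_restrictScalars_toSpanSingleton (c : ℂ) :
    ((ContinuousLinearMap.toSpanSingleton ℂ c).restrictScalars ℝ).det =
      Complex.normSq c := by
  simp [ContinuousLinearMap.det, LinearMap.det_restrictScalars, Algebra.norm_complex_eq]

theorem integral_image_eq_integral_normSq_deriv_smul {E : Type*} [NormedAddCommGroup E]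
    [NormedSpace ℝ E] {s : Set ℂ} (hs : MeasurableSet s) {f : ℂ → ℂ}
    (hf : ∀ x ∈ s, DifferentiableAt ℂ f x) (hinj : Set.InjOn f s) (g : ℂ → E) :
    ∫ x in f '' s, g x = ∫ x in s, Complex.normSq (deriv f x) • g (f x) := by
  rw [integral_image_eq_integral_abs_det_fderiv_smul volume hs
    (fun x hx => ((hf x hx).hasDerivAt.hasFDerivAt.restrictScalars ℝ).hasFDerivWithinAt) hinj]
  simp only [Complex.det_restrictScalars_toSpanSingleton, abs_of_nonneg (Complex.normSq_nonneg _)]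

theorem Complex.exp_mul_sum_sum_intCast_mul {ι κ : Type*} (a : ℂ) (s : Finset ι) (t : Finset κ)
    (n : ι → κ → ℤ) (I : ι → κ → ℂ) :
    Complex.exp (a * ∑ i ∈ s, ∑ j ∈ t, (n i j : ℂ) * I i j) =
      ∏ i ∈ s, ∏ j ∈ t, Complex.exp (a * I i j) ^ n i j := by
  simp only [Finset.mul_sum, Complex.exp_sum, ← Complex.exp_int_mul, mul_left_comm a]

section RationalMap

variable {P Q : ℂ[X]} {Ω : Set ℂ} {z w : ℂ}

theorem normSq_deriv_mul_expTransformKernel_eq_sum {ζ : ℂ} (hQ : Q.eval ζ ≠ 0)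
    (hz : (P - C z * Q).eval ζ ≠ 0) (hw : (P - C w * Q).eval ζ ≠ 0) :
    (Complex.normSq (deriv (fun t => P.eval t / Q.eval t) ζ) : ℂ) *
        expTransformKernel z w (P.eval ζ / Q.eval ζ) =
      ∑ α ∈ divisorSupport P Q z, ∑ β ∈ divisorSupport P Q w,
        ((divisorOrd P Q z α * divisorOrd P Q w β : ℤ) : ℂ) * expTransformKernel α β ζ := by
  have hkernel : ∀ d a : ℂ,
      (Complex.normSq d : ℂ) * expTransformKernel z w a = d / (a - z) * conj (d / (a - w)) :=
    fun d a => by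
      rw [expTransformKernel, map_div₀, map_sub, div_mul_div_comm, ← Complex.mul_conj, mul_one_div]
  rw [hkernel, deriv_eval_div_eval_div_sub_eq_sum z hQ hz,
    deriv_eval_div_eval_div_sub_eq_sum w hQ hw, map_sum, Finset.sum_mul_sum]
  refine Finset.sum_congr rfl fun α _ => Finset.sum_congr rfl fun β _ => ?_
  rw [expTransformKernel, map_div₀, map_sub, map_intCast, div_mul_div_comm, mul_one_div,
    Int.cast_mul]

theorem setIntegral_image_expTransformKernel_eq_sum (hΩo : IsOpen Ω)
    (hΩb : Bornology.IsBounded Ω) (hinj : Set.InjOn (fun t => P.eval t / Q.eval t) Ω)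
    (hQ : ∀ α ∈ closure Ω, Q.eval α ≠ 0)
    (hz : z ∉ closure ((fun t => P.eval t / Q.eval t) '' Ω))
    (hw : w ∉ closure ((fun t => P.eval t / Q.eval t) '' Ω)) :
    ∫ ζ in (fun t => P.eval t / Q.eval t) '' Ω, expTransformKernel z w ζ =
      ∑ α ∈ divisorSupport P Q z, ∑ β ∈ divisorSupport P Q w,
        ((divisorOrd P Q z α * divisorOrd P Q w β : ℤ) : ℂ) *
          ∫ ζ in Ω, expTransformKernel α β ζ := by
  have hint : ∀ α ∈ divisorSupport P Q z, ∀ β ∈ divisorSupport P Q w,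
      IntegrableOn (expTransformKernel α β) Ω := fun α hα β hβ =>
    integrableOn_expTransformKernel hΩb (notMem_closure_of_mem_divisorSupport hQ hz hα)
      (notMem_closure_of_mem_divisorSupport hQ hw hβ)
  have hpointwise : Set.EqOn
      (fun ζ => Complex.normSq (deriv (fun t => P.eval t / Q.eval t) ζ) •
        expTransformKernel z w (P.eval ζ / Q.eval ζ))
      (fun ζ => ∑ α ∈ divisorSupport P Q z, ∑ β ∈ divisorSupport P Q w,
        ((divisorOrd P Q z α * divisorOrd P Q w β : ℤ) : ℂ) * expTransformKernel α β ζ) Ω :=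
    fun ζ hζ => by
      have hζ := subset_closure hζ
      dsimp only
      rw [Complex.real_smul]
      exact normSq_deriv_mul_expTransformKernel_eq_sum (hQ ζ hζ)
        (eval_sub_C_mul_ne_zero_of_mem_closure hζ (hQ ζ hζ) hz)
        (eval_sub_C_mul_ne_zero_of_mem_closure hζ (hQ ζ hζ) hw)
  rw [integral_image_eq_integral_normSq_deriv_smul hΩo.measurableSet
      (fun ζ hζ => (hasDerivAt_eval_div_eval (hQ ζ (subset_closure hζ))).differentiableAt) hinj,
    setIntegral_congr_fun hΩo.measurableSet hpointwise,
    integral_finsetSum _ fun α hα => integrable_finsetSum _ fun β hβ =>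
      (hint α hα β hβ).const_mul _]
  refine Finset.sum_congr rfl fun α hα => ?_
  rw [integral_finsetSum _ fun β hβ => (hint α hα β hβ).const_mul _]
  exact Finset.sum_congr rfl fun β _ => integral_const_mul _ _

end RationalMap

theorem expTransform_rational_image_general
    (Ω : Set ℂ) (hΩo : IsOpen Ω) (hΩb : Bornology.IsBounded Ω)
    (P Q : Polynomial ℂ) (hQ : Q ≠ 0) (hco : IsCoprime P Q)
    (F : ℂ → ℂ) (hF : ∀ ζ, F ζ = P.eval ζ / Q.eval ζ)
    (hFbdd : ∃ C : ℝ, ∀ ζ ∈ Ω, ‖F ζ‖ ≤ C)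
    (hinj : Set.InjOn F Ω)
    (z w : ℂ) (hz : z ∉ closure (F '' Ω)) (hw : w ∉ closure (F '' Ω)) :
    expTransform (F '' Ω) z w =
      ∏ α ∈ (P - C z * Q).roots.toFinset ∪ Q.roots.toFinset,
        ∏ β ∈ (P - C w * Q).roots.toFinset ∪ Q.roots.toFinset,
          expTransform Ω α β ^
            ((((P - C z * Q).rootMultiplicity α : ℤ) - (Q.rootMultiplicity α : ℤ)) *
             (((P - C w * Q).rootMultiplicity β : ℤ) - (Q.rootMultiplicity β : ℤ))) := by
  obtain rfl : F = fun ζ => P.eval ζ / Q.eval ζ := funext hF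
  have hQΩ : ∀ α ∈ closure Ω, Q.eval α ≠ 0 := fun α =>
    eval_ne_zero_of_mem_closure_of_bounded hco hQ hΩo hFbdd
  rw [expTransform_eq, setIntegral_image_expTransformKernel_eq_sum hΩo hΩb hinj hQΩ hz hw,
    Complex.exp_mul_sum_sum_intCast_mul]
  rfl

/-- **Transformation of the exponential transform under rational maps.**
Let `F = P/Q` (with `P, Q` coprime, `Q ≠ 0`) be a rational function which is bounded and
injective on a bounded domain `Ω ⊂ ℂ`. For `c ∈ ℂ`, the divisor `D_c : ℙ → ℤ` of `F - c`
assigns to a finite point `α` the multiplicity `ord_α(P - cQ) - ord_α(Q)`; points of the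
Riemann sphere outside the two finite root sets (including `∞`, where `E_Ω(∞,·) = 1`)
contribute trivially to the product below. Then for `z, w` outside the closure of `F(Ω)`:
`E_{F(Ω)}(z,w) = Π_{α,β} E_Ω(α,β)^{D_z(α) D_w(β)}`. -/
theorem expTransform_rational_image
    (Ω : Set ℂ) (hΩo : IsOpen Ω) (hΩb : Bornology.IsBounded Ω) (hΩc : IsConnected Ω)
    (P Q : Polynomial ℂ) (hQ : Q ≠ 0) (hco : IsCoprime P Q)
    (F : ℂ → ℂ) (hF : ∀ ζ, F ζ = P.eval ζ / Q.eval ζ)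
    (hFbdd : ∃ C : ℝ, ∀ ζ ∈ Ω, ‖F ζ‖ ≤ C)
    (hinj : Set.InjOn F Ω)
    (z w : ℂ) (hz : z ∉ closure (F '' Ω)) (hw : w ∉ closure (F '' Ω)) :
    expTransform (F '' Ω) z w =
      ∏ α ∈ (P - C z * Q).roots.toFinset ∪ Q.roots.toFinset,
        ∏ β ∈ (P - C w * Q).roots.toFinset ∪ Q.roots.toFinset,
          expTransform Ω α β ^
            ((((P - C z * Q).rootMultiplicity α : ℤ) - (Q.rootMultiplicity α : ℤ)) *
             (((P - C w * Q).rootMultiplicity β : ℤ) - (Q.rootMultiplicity β : ℤ))) :=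
  expTransform_rational_image_general Ω hΩo hΩb P Q hQ hco F hF hFbdd hinj z w hz hw
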